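/- Let S be a finite orthodox 0-rectangular band. For a nonzero idempotent e ∈ S, let m_e denote the number of distinct R-classes of elements of V(e) and n_e the number of distinct L-classes of elements of V(e). Then S has a permutation matching if and only if for all nonzero idempotents e, f ∈ S, m_e * n_f = m_f * n_e (i.e. the maximal rectangular subbands V(e) of S \ {0} are pairwise similar). -/
import Mathlib


variable {S : Type*}

/-- `b` is an inverse of `a`: `a*b*a = a` and `b*a*b = b`. -/
def IsInverseOf [Semigroup S] (b a : S) : Prop := a * b * a = a ∧ b * a * b = b

/-- `invs a` is the set `V(a)` of inverses of `a`. -/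
def invs [Semigroup S] (a : S) : Set S := {b | IsInverseOf b a}

/-- `invsSet A` is `V(A) = ⋃ a ∈ A, V(a)`. -/
def invsSet [Semigroup S] (A : Set S) : Set S := ⋃ a ∈ A, invs a

/-- A semigroup is regular if every element has an inverse. -/
def IsRegularSemigroup (S : Type*) [Semigroup S] : Prop := ∀ a : S, ∃ b, IsInverseOf b a

/-- A permutation matching: a bijection sending each element to one of its inverses. -/
def IsPermMatching [Semigroup S] (f : S → S) : Prop :=
  Function.Bijective f ∧ ∀ a, f a ∈ invs a

def lSet [Semigroup S] (a : S) : Set S := insert a {x | ∃ s, s * a = x}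
def rSet [Semigroup S] (a : S) : Set S := insert a {x | ∃ s, a * s = x}
/-- Green's L relation. -/
def greenL [Semigroup S] (a b : S) : Prop := lSet a = lSet b
/-- Green's R relation. -/
def greenR [Semigroup S] (a b : S) : Prop := rSet a = rSet b
/-- Green's H relation. -/
def greenH [Semigroup S] (a b : S) : Prop := greenL a b ∧ greenR a b
/-- Green's D relation. -/
def greenD [Semigroup S] (a b : S) : Prop := ∃ c, greenL a c ∧ greenR c b
def dClass [Semigroup S] (a : S) : Set S := {b | greenD a b}
def lClass [Semigroup S] (a : S) : Set S := {b | greenL a b}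
def rClass [Semigroup S] (a : S) : Set S := {b | greenR a b}

/-- `spow x n = x^(n+1)` (positive powers in a semigroup). -/
def spow [Semigroup S] (x : S) : ℕ → S
  | 0 => x
  | n + 1 => spow x n * x

/-- `e` is an idempotent positive power of `x`; in a finite semigroup this
characterises `e = x^ω`. -/
def IsOmega [Semigroup S] (x e : S) : Prop := (∃ k : ℕ, e = spow x k) ∧ e * e = e

/-- `y = x^(ω-1)`: `y = x^m` for the least positive `m` with `x^(m+1)` idempotent
(in a finite semigroup `x^(m+1)` idempotent iff `x^(m+1) = x^ω`). Here `m = k+1`. -/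
def IsOmegaMinusOne [Semigroup S] (x y : S) : Prop :=
  ∃ k : ℕ, y = spow x k ∧ spow x (k+1) * spow x (k+1) = spow x (k+1) ∧
    ∀ j < k, ¬ (spow x (j+1) * spow x (j+1) = spow x (j+1))

section Aux

variable [Semigroup S]

lemma spow_succ (x : S) (n : ℕ) : spow x (n+1) = spow x n * x := rfl

lemma spow_succ' (x : S) (n : ℕ) : spow x (n+1) = x * spow x n := by
  induction n with
  | zero => rfl
  | succ n ih =>
      calc spow x (n+2) = spow x (n+1) * x := rfl
        _ = (x * spow x n) * x := by rw [ih]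
        _ = x * (spow x n * x) := mul_assoc _ _ _
        _ = x * spow x (n+1) := rfl

lemma spow_add (x : S) (m n : ℕ) : spow x (m + n + 1) = spow x m * spow x n := by
  induction n with
  | zero => rfl
  | succ n ih =>
      have h : m + (n+1) + 1 = (m + n + 1) + 1 := by omega
      rw [h, spow_succ, ih, spow_succ, mul_assoc]

lemma exists_idem_spow [Fintype S] (x : S) : ∃ n, spow x n * spow x n = spow x n := by
  classical
  have hni : ¬ Function.Injective (fun n : Fin (Fintype.card S + 1) => spow x n) := by
    intro hinj
    have := Fintype.card_le_of_injective _ hinj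
    simp at this
  obtain ⟨i, j, heq, hne⟩ := Function.not_injective_iff.1 hni
  -- wlog i < j
  obtain ⟨m, p, hrec⟩ : ∃ m p : ℕ, spow x m = spow x (m + p + 1) := by
    rcases lt_or_gt_of_ne (fun h : (i:ℕ) = (j:ℕ) => hne (Fin.ext h)) with h | h
    · exact ⟨i, j - i - 1, by rw [heq]; congr 1; omega⟩
    · exact ⟨j, i - j - 1, by rw [← heq]; congr 1; omega⟩
  have hshift : ∀ t, spow x (m + (p+1) * t) = spow x m := by
    intro t
    induction t with
    | zero => simp
    | succ t ih =>
        have h1 : m + (p+1) * (t+1) = (m + (p+1)*t) + p + 1 := by ring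
        rw [h1, spow_add, ih, ← spow_add]
        exact hrec.symm
  have hshift2 : ∀ d t, spow x (m + d + (p+1) * t) = spow x (m + d) := by
    intro d t
    cases d with
    | zero => simpa using hshift t
    | succ d =>
        have h1 : m + (d+1) + (p+1)*t = (m + (p+1)*t) + d + 1 := by ring
        rw [h1, spow_add, hshift t, ← spow_add]
        rfl
  refine ⟨m + p * (m + 1), ?_⟩
  rw [← spow_add]
  have h2 : m + p * (m+1) + (m + p * (m+1)) + 1 = m + (p * (m+1)) + (p+1) * (m+1) := by ring
  rw [h2, hshift2]

lemma sandwich [Fintype S] {a u v : S} (h : a = u * a * v) :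
    (∃ n, a = a * spow v n) ∧ (∃ n, a = spow u n * a) := by
  have key : ∀ n, a = spow u n * a * spow v n := by
    intro n
    induction n with
    | zero => exact h
    | succ n ih =>
        calc a = u * a * v := h
          _ = u * (spow u n * a * spow v n) * v := by rw [← ih]
          _ = (u * spow u n) * a * (spow v n * v) := by
              simp only [mul_assoc]
          _ = spow u (n+1) * a * spow v (n+1) := by rw [← spow_succ', ← spow_succ]
  constructor
  · obtain ⟨n, hn⟩ := exists_idem_spow v
    refine ⟨n, ?_⟩
    calc a = spow u n * a * spow v n := key n
      _ = spow u n * a * (spow v n * spow v n) := by rw [hn]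
      _ = (spow u n * a * spow v n) * spow v n := by simp only [mul_assoc]
      _ = a * spow v n := by rw [← key n]
  · obtain ⟨n, hn⟩ := exists_idem_spow u
    refine ⟨n, ?_⟩
    calc a = spow u n * a * spow v n := key n
      _ = (spow u n * spow u n) * a * spow v n := by rw [hn]
      _ = spow u n * (spow u n * a * spow v n) := by simp only [mul_assoc]
      _ = spow u n * a := by rw [← key n]

end Aux
section Main

variable [Semigroup S] {z : S}

lemma ideal_cases (hz : ∀ x : S, z * x = z ∧ x * z = z)
    (h0 : ∀ I : Set S, I.Nonempty → (∀ a ∈ I, ∀ s : S, s * a ∈ I ∧ a * s ∈ I) →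
      I = {z} ∨ I = Set.univ)
    {a : S} (ha : a ≠ z) (b : S) :
    b = a ∨ (∃ s, s * a = b) ∨ (∃ t, a * t = b) ∨ (∃ s t, s * a * t = b) := by
  set I : Set S :=
    {b | b = a ∨ (∃ s, s * a = b) ∨ (∃ t, a * t = b) ∨ (∃ s t, s * a * t = b)} with hI
  have hcl : ∀ c ∈ I, ∀ s : S, s * c ∈ I ∧ c * s ∈ I := by
    rintro c (rfl | ⟨u, rfl⟩ | ⟨u, rfl⟩ | ⟨u, w, rfl⟩) s
    · exact ⟨Or.inr (Or.inl ⟨s, rfl⟩), Or.inr (Or.inr (Or.inl ⟨s, rfl⟩))⟩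
    · refine ⟨Or.inr (Or.inl ⟨s * u, mul_assoc _ _ _⟩),
        Or.inr (Or.inr (Or.inr ⟨u, s, rfl⟩))⟩
    · refine ⟨Or.inr (Or.inr (Or.inr ⟨s, u, mul_assoc _ _ _⟩)),
        Or.inr (Or.inr (Or.inl ⟨u * s, (mul_assoc _ _ _).symm⟩))⟩
    · refine ⟨Or.inr (Or.inr (Or.inr ⟨s * u, w, ?_⟩)),
        Or.inr (Or.inr (Or.inr ⟨u, w * s, ?_⟩))⟩
      · simp only [mul_assoc]
      · simp only [mul_assoc]
  rcases h0 I ⟨a, Or.inl rfl⟩ hcl with h | h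
  · exfalso
    have haI : a ∈ I := Or.inl rfl
    rw [h] at haI
    exact ha haI
  · have : b ∈ I := by rw [h]; trivial
    exact this

lemma stab_R [Fintype S] (hz : ∀ x : S, z * x = z ∧ x * z = z)
    (h0 : ∀ I : Set S, I.Nonempty → (∀ a ∈ I, ∀ s : S, s * a ∈ I ∧ a * s ∈ I) →
      I = {z} ∨ I = Set.univ)
    {a b : S} (hab : a * b ≠ z) : greenR (a * b) a := by
  have key : a = a * b ∨ ∃ w, a = (a * b) * w := by
    rcases ideal_cases hz h0 hab a with h | ⟨s, h⟩ | ⟨t, h⟩ | ⟨s, t, h⟩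
    · exact Or.inl h
    · -- a = s * (a*b) = (s*a) * b
      have hs : a = s * a * b := by rw [← mul_assoc] at h; exact h.symm
      obtain ⟨⟨n, hn⟩, -⟩ := sandwich hs
      cases n with
      | zero => exact Or.inl hn
      | succ k =>
          refine Or.inr ⟨spow b k, ?_⟩
          calc a = a * spow b (k+1) := hn
            _ = a * (b * spow b k) := by rw [spow_succ']
            _ = (a * b) * spow b k := (mul_assoc _ _ _).symm
    · exact Or.inr ⟨t, h.symm⟩
    · -- a = s * (a*b) * t = s * a * (b*t)
      have hs : a = s * a * (b * t) := by
        conv_lhs => rw [← h]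
        simp only [mul_assoc]
      obtain ⟨⟨n, hn⟩, -⟩ := sandwich hs
      cases n with
      | zero =>
          refine Or.inr ⟨t, ?_⟩
          calc a = a * spow (b*t) 0 := hn
            _ = a * (b * t) := rfl
            _ = a * b * t := (mul_assoc _ _ _).symm
      | succ k =>
          refine Or.inr ⟨t * spow (b*t) k, ?_⟩
          calc a = a * spow (b*t) (k+1) := hn
            _ = a * ((b*t) * spow (b*t) k) := by rw [spow_succ']
            _ = a * b * (t * spow (b*t) k) := by simp only [mul_assoc]
  show rSet (a * b) = rSet a
  apply Set.ext
  intro y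
  simp only [rSet, Set.mem_insert_iff, Set.mem_setOf_eq]
  constructor
  · rintro (rfl | ⟨s, rfl⟩)
    · exact Or.inr ⟨b, rfl⟩
    · exact Or.inr ⟨b * s, (mul_assoc _ _ _).symm⟩
  · rintro (rfl | ⟨s, rfl⟩)
    · rcases key with h | ⟨w, hw⟩
      · exact Or.inl h
      · exact Or.inr ⟨w, hw.symm⟩
    · rcases key with h | ⟨w, hw⟩
      · exact Or.inr ⟨s, by rw [← h]⟩
      · refine Or.inr ⟨w * s, ?_⟩
        conv_rhs => rw [hw]
        simp only [mul_assoc]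

lemma stab_L [Fintype S] (hz : ∀ x : S, z * x = z ∧ x * z = z)
    (h0 : ∀ I : Set S, I.Nonempty → (∀ a ∈ I, ∀ s : S, s * a ∈ I ∧ a * s ∈ I) →
      I = {z} ∨ I = Set.univ)
    {a b : S} (hab : a * b ≠ z) : greenL (a * b) b := by
  have key : b = a * b ∨ ∃ w, b = w * (a * b) := by
    rcases ideal_cases hz h0 hab b with h | ⟨s, h⟩ | ⟨t, h⟩ | ⟨s, t, h⟩
    · exact Or.inl h
    · exact Or.inr ⟨s, h.symm⟩
    · -- b = (a*b)*t = a * b * t = a * (b*t) : b = u*b*v with u = a, v = t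
      have hs : b = a * b * t := h.symm
      obtain ⟨-, ⟨n, hn⟩⟩ := sandwich (a := b) (u := a) (v := t) hs
      cases n with
      | zero => exact Or.inl hn
      | succ k =>
          refine Or.inr ⟨spow a k, ?_⟩
          calc b = spow a (k+1) * b := hn
            _ = (spow a k * a) * b := by rw [spow_succ]
            _ = spow a k * (a * b) := mul_assoc _ _ _
    · -- b = s*(a*b)*t = (s*a)*b*t
      have hs : b = (s * a) * b * t := by
        conv_lhs => rw [← h]
        simp only [mul_assoc]
      obtain ⟨-, ⟨n, hn⟩⟩ := sandwich hs
      cases n with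
      | zero =>
          refine Or.inr ⟨s, ?_⟩
          calc b = spow (s*a) 0 * b := hn
            _ = (s * a) * b := rfl
            _ = s * (a * b) := mul_assoc _ _ _
      | succ k =>
          refine Or.inr ⟨spow (s*a) k * s, ?_⟩
          calc b = spow (s*a) (k+1) * b := hn
            _ = (spow (s*a) k * (s * a)) * b := by rw [spow_succ]
            _ = (spow (s*a) k * s) * (a * b) := by simp only [mul_assoc]
  show lSet (a * b) = lSet b
  apply Set.ext
  intro y
  simp only [lSet, Set.mem_insert_iff, Set.mem_setOf_eq]
  constructor
  · rintro (rfl | ⟨s, rfl⟩)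
    · exact Or.inr ⟨a, rfl⟩
    · exact Or.inr ⟨s * a, mul_assoc _ _ _⟩
  · rintro (rfl | ⟨s, rfl⟩)
    · rcases key with h | ⟨w, hw⟩
      · exact Or.inl h
      · exact Or.inr ⟨w, hw.symm⟩
    · rcases key with h | ⟨w, hw⟩
      · exact Or.inr ⟨s, by rw [← h]⟩
      · refine Or.inr ⟨s * w, ?_⟩
        conv_rhs => rw [hw]
        simp only [mul_assoc]

lemma greenR_mul_left (hz : ∀ x : S, z * x = z ∧ x * z = z)
    {a b : S} (h : greenR a b) (c : S) : c * a = z ↔ c * b = z := by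
  have hab : b ∈ rSet a := by
    rw [h]; exact Set.mem_insert _ _
  have hba : a ∈ rSet b := by
    rw [← h]; exact Set.mem_insert _ _
  constructor
  · intro h0
    rcases Set.mem_insert_iff.1 hab with rfl | ⟨s, rfl⟩
    · exact h0
    · rw [← mul_assoc, h0]; exact (hz s).1
  · intro h0
    rcases Set.mem_insert_iff.1 hba with rfl | ⟨s, rfl⟩
    · exact h0
    · rw [← mul_assoc, h0]; exact (hz s).1

lemma greenL_mul_right (hz : ∀ x : S, z * x = z ∧ x * z = z)
    {a b : S} (h : greenL a b) (c : S) : a * c = z ↔ b * c = z := by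
  have hab : b ∈ lSet a := by
    rw [h]; exact Set.mem_insert _ _
  have hba : a ∈ lSet b := by
    rw [← h]; exact Set.mem_insert _ _
  constructor
  · intro h0
    rcases Set.mem_insert_iff.1 hab with rfl | ⟨s, rfl⟩
    · exact h0
    · rw [mul_assoc, h0]; exact (hz s).2
  · intro h0
    rcases Set.mem_insert_iff.1 hba with rfl | ⟨s, rfl⟩
    · exact h0
    · rw [mul_assoc, h0]; exact (hz s).2

lemma rClass_eq_iff {a b : S} : rClass a = rClass b ↔ greenR a b := by
  constructor
  · intro h
    have hb : b ∈ rClass b := rfl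
    rw [← h] at hb
    exact hb
  · intro h
    ext c
    show greenR a c ↔ greenR b c
    unfold greenR at *
    rw [h]

lemma lClass_eq_iff {a b : S} : lClass a = lClass b ↔ greenL a b := by
  constructor
  · intro h
    have hb : b ∈ lClass b := rfl
    rw [← h] at hb
    exact hb
  · intro h
    ext c
    show greenL a c ↔ greenL b c
    unfold greenL at *
    rw [h]

end Main
section Main2

variable [Semigroup S] {z : S}

lemma invs_z (hz : ∀ x : S, z * x = z ∧ x * z = z) : invs z = {z} := by
  ext b
  simp only [invs, IsInverseOf, Set.mem_setOf_eq, Set.mem_singleton_iff]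
  constructor
  · rintro ⟨-, h2⟩
    calc b = b * z * b := h2.symm
      _ = z * b := by rw [(hz b).2]
      _ = z := (hz b).1
  · intro hb
    rw [hb]
    exact ⟨by rw [(hz z).1, (hz z).1], by rw [(hz z).1, (hz z).1]⟩

lemma invs_props (hz : ∀ x : S, z * x = z ∧ x * z = z) {a b : S}
    (ha : a ≠ z) (hb : b ∈ invs a) : b ≠ z ∧ a * b ≠ z ∧ b * a ≠ z := by
  obtain ⟨h1, h2⟩ := hb
  have hb0 : b ≠ z := by
    intro h
    apply ha
    calc a = a * b * a := h1.symm
      _ = a * z * a := by rw [h]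
      _ = z * a := by rw [(hz a).2]
      _ = z := (hz a).1
  refine ⟨hb0, ?_, ?_⟩
  · intro h
    exact ha (by calc a = a * b * a := h1.symm
      _ = z * a := by rw [h]
      _ = z := (hz a).1)
  · intro h
    exact hb0 (by calc b = b * a * b := h2.symm
      _ = z * b := by rw [h]
      _ = z := (hz b).1)

variable [Fintype S]
variable (hz : ∀ x : S, z * x = z ∧ x * z = z)
  (h0 : ∀ I : Set S, I.Nonempty → (∀ a ∈ I, ∀ s : S, s * a ∈ I ∧ a * s ∈ I) →
    I = {z} ∨ I = Set.univ)
  (hreg : IsRegularSemigroup S)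
  (horth : ∀ e f : S, e * e = e → f * f = f → (e * f) * (e * f) = e * f)
  (hH : ∀ a b : S, greenH a b → a = b)

include hz h0 hH in
lemma idem_of_sq {c : S} (hcc : c * c ≠ z) : c * c = c :=
  hH _ _ ⟨stab_L hz h0 hcc, stab_R hz h0 hcc⟩

include hz h0 hH in
lemma invs_char {a b : S} (ha : a ≠ z) (hb : b ≠ z) :
    b ∈ invs a ↔ a * b ≠ z ∧ b * a ≠ z := by
  constructor
  · intro h
    exact ⟨(invs_props hz ha h).2.1, (invs_props hz ha h).2.2⟩
  · rintro ⟨hab, hba⟩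
    have h1 : a * (b * a) ≠ z := fun hq =>
      hab ((greenR_mul_left hz (stab_R hz h0 hba) a).mp hq)
    have haba : a * b * a ≠ z := by rw [mul_assoc]; exact h1
    have h2 : b * (a * b) ≠ z := fun hq =>
      hba ((greenR_mul_left hz (stab_R hz h0 hab) b).mp hq)
    have hbab : b * a * b ≠ z := by rw [mul_assoc]; exact h2
    constructor
    · refine hH _ _ ⟨stab_L hz h0 haba, ?_⟩
      have := stab_R hz h0 h1
      rw [← mul_assoc] at this
      exact this
    · refine hH _ _ ⟨stab_L hz h0 hbab, ?_⟩
      have := stab_R hz h0 h2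
      rw [← mul_assoc] at this
      exact this

include hz h0 in
lemma sandwich_univ {f : S} (hf : f ≠ z) (hidem : f * f = f) (p : S) :
    ∃ x y, x * f * y = p := by
  set I : Set S := {p | ∃ x y, x * f * y = p} with hI
  have hcl : ∀ c ∈ I, ∀ s : S, s * c ∈ I ∧ c * s ∈ I := by
    rintro c ⟨x, y, rfl⟩ s
    constructor
    · exact ⟨s * x, y, by simp only [mul_assoc]⟩
    · exact ⟨x, y * s, by simp only [mul_assoc]⟩
  have hfI : f ∈ I := ⟨f, f, by rw [hidem, hidem]⟩
  rcases h0 I ⟨f, hfI⟩ hcl with h | h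
  · exfalso
    rw [h] at hfI
    exact hf hfI
  · have : p ∈ I := by rw [h]; trivial
    exact this

include hz h0 hreg in
lemma meet {a b : S} (ha : a ≠ z) (hb : b ≠ z) :
    ∃ c, c ≠ z ∧ greenR c a ∧ greenL c b := by
  obtain ⟨a', ha'⟩ := hreg a
  obtain ⟨b', hb'⟩ := hreg b
  have hpa := invs_props hz ha ha'
  have hpb := invs_props hz hb hb'
  set e := a * a' with he
  set f := b' * b with hf
  have he0 : e ≠ z := hpa.2.1
  have hf0 : f ≠ z := hpb.2.2
  have hfidem : f * f = f := by
    calc (b' * b) * (b' * b) = b' * (b * b' * b) := by simp only [mul_assoc]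
      _ = b' * b := by rw [hb'.1]
  have heidem : e * e = e := by
    calc (a * a') * (a * a') = (a * a' * a) * a' := by simp only [mul_assoc]
      _ = a * a' := by rw [ha'.1]
  obtain ⟨x, y, hxy⟩ := sandwich_univ hz h0 hf0 hfidem e
  have hc : (e * x) * f ≠ z := by
    intro hcz
    apply he0
    calc e = e * e := heidem.symm
      _ = e * (x * f * y) := by rw [hxy]
      _ = ((e * x) * f) * y := by simp only [mul_assoc]
      _ = z * y := by rw [hcz]
      _ = z := (hz y).1
  refine ⟨(e * x) * f, hc, ?_, ?_⟩
  · have h1 : e * (x * f) ≠ z := by rw [← mul_assoc]; exact hc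
    have hR1 : greenR (e * (x * f)) e := stab_R hz h0 h1
    have hR2 : greenR e a := stab_R hz h0 he0
    rw [← mul_assoc] at hR1
    exact hR1.trans hR2
  · have hL1 : greenL ((e * x) * f) f := stab_L hz h0 hc
    have hL2 : greenL f b := stab_L hz h0 hf0
    exact hL1.trans hL2

include hz h0 hreg horth hH in
lemma block {a b c d : S} (h1 : a * b ≠ z) (h2 : c * b ≠ z) (h3 : c * d ≠ z) :
    a * d ≠ z := by
  have ha : a ≠ z := fun h => h1 (by rw [h]; exact (hz b).1)
  have hb : b ≠ z := fun h => h1 (by rw [h]; exact (hz a).2)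
  have hc : c ≠ z := fun h => h3 (by rw [h]; exact (hz d).1)
  have hd : d ≠ z := fun h => h3 (by rw [h]; exact (hz c).2)
  obtain ⟨u, hu0, huR, huL⟩ := meet hz h0 hreg hb ha
  obtain ⟨w, hw0, hwR, hwL⟩ := meet hz h0 hreg hd hc
  have huu : u * u ≠ z := fun hq =>
    h1 (((greenL_mul_right hz huL u).trans (greenR_mul_left hz huR a)).mp hq)
  have hui : u * u = u := idem_of_sq hz h0 hH huu
  have hww : w * w ≠ z := fun hq =>
    h3 (((greenL_mul_right hz hwL w).trans (greenR_mul_left hz hwR c)).mp hq)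
  have hwi : w * w = w := idem_of_sq hz h0 hH hww
  have hwu : w * u ≠ z := fun hq =>
    h2 (((greenL_mul_right hz hwL u).trans (greenR_mul_left hz huR c)).mp hq)
  have hidem : (w * u) * (w * u) = w * u := horth w u hwi hui
  have hne2 : (w * u) * (w * u) ≠ z := by rw [hidem]; exact hwu
  have hLwu : greenL (w * u) u := stab_L hz h0 hwu
  have hRwu : greenR (w * u) w := stab_R hz h0 hwu
  have e1 : a * d = z ↔ u * d = z := (greenL_mul_right hz huL d).symm
  have e2 : u * d = z ↔ (w * u) * d = z := (greenL_mul_right hz hLwu d).symm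
  have e3 : (w * u) * d = z ↔ (w * u) * w = z := (greenR_mul_left hz hwR (w * u)).symm
  have e4 : (w * u) * w = z ↔ (w * u) * (w * u) = z := (greenR_mul_left hz hRwu (w * u)).symm
  intro h
  exact hne2 ((e1.trans (e2.trans (e3.trans e4))).mp h)

end Main2
section Main3

variable [Semigroup S]

/-- `IEqv z a b`: the R-classes of `a` and `b` lie in the same block. -/
def IEqv (z a b : S) : Prop := ∃ c, c * a ≠ z ∧ c * b ≠ z
/-- `LEqv z a b`: the L-classes of `a` and `b` lie in the same block. -/
def LEqv (z a b : S) : Prop := ∃ c, a * c ≠ z ∧ b * c ≠ z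

/-- Number-of-R-classes carrier for the block of `a`. -/
def RsetOf (z a : S) : Set (Set S) := rClass '' {x | x ≠ z ∧ IEqv z x a}
/-- Number-of-L-classes carrier for the block of `a`. -/
def LsetOf (z a : S) : Set (Set S) := lClass '' {x | x ≠ z ∧ LEqv z x a}

lemma IEqv_symm {z a b : S} (h : IEqv z a b) : IEqv z b a :=
  ⟨h.choose, h.choose_spec.2, h.choose_spec.1⟩

lemma LEqv_symm {z a b : S} (h : LEqv z a b) : LEqv z b a :=
  ⟨h.choose, h.choose_spec.2, h.choose_spec.1⟩

variable [Fintype S] {z : S}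
variable (hz : ∀ x : S, z * x = z ∧ x * z = z)
  (h0 : ∀ I : Set S, I.Nonempty → (∀ a ∈ I, ∀ s : S, s * a ∈ I ∧ a * s ∈ I) →
    I = {z} ∨ I = Set.univ)
  (hreg : IsRegularSemigroup S)
  (horth : ∀ e f : S, e * e = e → f * f = f → (e * f) * (e * f) = e * f)
  (hH : ∀ a b : S, greenH a b → a = b)

include hz h0 hreg horth hH

lemma IEqv_trans {x a b : S} (h1 : IEqv z x a) (h2 : IEqv z a b) : IEqv z x b := by
  obtain ⟨c, hcx, hca⟩ := h1
  obtain ⟨d, hda, hdb⟩ := h2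
  exact ⟨d, block hz h0 hreg horth hH hda hca hcx, hdb⟩

lemma LEqv_trans {x a b : S} (h1 : LEqv z x a) (h2 : LEqv z a b) : LEqv z x b := by
  obtain ⟨c, hxc, hac⟩ := h1
  obtain ⟨d, had, hbd⟩ := h2
  exact ⟨d, block hz h0 hreg horth hH hxc hac had, hbd⟩

omit h0 hreg horth hH in
lemma IEqv_congr {x y a : S} (h : greenR x y) : IEqv z x a ↔ IEqv z y a := by
  constructor
  · rintro ⟨c, hcx, hca⟩
    exact ⟨c, fun hq => hcx ((greenR_mul_left hz h c).mpr hq), hca⟩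
  · rintro ⟨c, hcy, hca⟩
    exact ⟨c, fun hq => hcy ((greenR_mul_left hz h c).mp hq), hca⟩

omit h0 hreg horth hH in
lemma LEqv_congr {x y a : S} (h : greenL x y) : LEqv z x a ↔ LEqv z y a := by
  constructor
  · rintro ⟨c, hxc, hac⟩
    exact ⟨c, fun hq => hxc ((greenL_mul_right hz h c).mpr hq), hac⟩
  · rintro ⟨c, hyc, hac⟩
    exact ⟨c, fun hq => hyc ((greenL_mul_right hz h c).mp hq), hac⟩



omit h0 horth hH in
lemma cls_z_eq : {y : S | invs y = invs z} = {z} := by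
  ext y
  simp only [Set.mem_setOf_eq, Set.mem_singleton_iff]
  constructor
  · intro hy
    by_contra hy0
    obtain ⟨b, hb⟩ := hreg y
    have hpb := invs_props hz hy0 hb
    have hbz : b ∈ invs z := by rw [← hy]; exact hb
    rw [invs_z hz] at hbz
    exact hpb.1 hbz
  · intro h; rw [h]

lemma invs_eq_iff {a b : S} (ha : a ≠ z) (hb : b ≠ z) :
    invs a = invs b ↔ IEqv z a b ∧ LEqv z a b := by
  constructor
  · intro h
    obtain ⟨a', ha'⟩ := hreg a
    have hpa := invs_props hz ha ha'
    have ha'b : a' ∈ invs b := by rw [← h]; exact ha'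
    have hpb := invs_props hz hb ha'b
    exact ⟨⟨a', hpa.2.2, hpb.2.2⟩, ⟨a', hpa.2.1, hpb.2.1⟩⟩
  · rintro ⟨hI, hL⟩
    have main : ∀ p q : S, p ≠ z → q ≠ z → IEqv z p q → LEqv z p q →
        invs p ⊆ invs q := by
      intro p q hp hq hIpq hLpq x hx
      have hpx := invs_props hz hp hx
      obtain ⟨c, hcp, hcq⟩ := hIpq
      obtain ⟨d, hpd, hqd⟩ := hLpq
      have hqx : q * x ≠ z := block hz h0 hreg horth hH hqd hpd hpx.2.1
      have hxq : x * q ≠ z := block hz h0 hreg horth hH hpx.2.2 hcp hcq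
      exact (invs_char hz h0 hH hq hpx.1).mpr ⟨hqx, hxq⟩
    exact Set.Subset.antisymm (main a b ha hb hI hL)
      (main b a hb ha (IEqv_symm hI) (LEqv_symm hL))

lemma invs_mem_invs {a x : S} (ha : a ≠ z) (hx : x ∈ invs a) :
    invs x = {y | invs y = invs a} := by
  have hpx := invs_props hz ha hx
  have hxa : a ∈ invs x := ⟨hx.2, hx.1⟩
  ext y
  simp only [Set.mem_setOf_eq]
  constructor
  · intro hy
    have hpy := invs_props hz hpx.1 hy
    have hpxa := invs_props hz hpx.1 hxa
    refine (invs_eq_iff hz h0 hreg horth hH hpy.1 ha).mpr ?_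
    exact ⟨⟨x, hpy.2.1, hpxa.2.1⟩, ⟨x, hpy.2.2, hpxa.2.2⟩⟩
  · intro hy
    have hy0 : y ≠ z := by
      intro h
      rw [h, invs_z hz] at hy
      have : x ∈ invs a := hx
      rw [← hy] at this
      exact hpx.1 this
    obtain ⟨hI, hL⟩ := (invs_eq_iff hz h0 hreg horth hH hy0 ha).mp hy
    obtain ⟨c, hcy, hca⟩ := hI
    obtain ⟨d, hyd, had⟩ := hL
    have hxy : x * y ≠ z := block hz h0 hreg horth hH hpx.2.2 hca hcy
    have hyx : y * x ≠ z := block hz h0 hreg horth hH hyd had hpx.2.1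
    exact (invs_char hz h0 hH hpx.1 hy0).mpr ⟨hxy, hyx⟩



lemma cls_eq {a : S} (ha : a ≠ z) :
    {y | invs y = invs a} = {y | y ≠ z ∧ IEqv z y a ∧ LEqv z y a} := by
  ext y
  simp only [Set.mem_setOf_eq]
  constructor
  · intro hy
    have hy0 : y ≠ z := by
      intro h
      obtain ⟨a', ha'⟩ := hreg a
      have hpa := invs_props hz ha ha'
      have : a' ∈ invs y := by rw [hy]; exact ha'
      rw [h, invs_z hz] at this
      exact hpa.1 this
    obtain ⟨hI, hL⟩ := (invs_eq_iff hz h0 hreg horth hH hy0 ha).mp hy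
    exact ⟨hy0, hI, hL⟩
  · rintro ⟨hy0, hI, hL⟩
    exact (invs_eq_iff hz h0 hreg horth hH hy0 ha).mpr ⟨hI, hL⟩

lemma RsetOf_eq {a b : S} (h : IEqv z a b) : RsetOf z a = RsetOf z b := by
  unfold RsetOf
  have : {x : S | x ≠ z ∧ IEqv z x a} = {x | x ≠ z ∧ IEqv z x b} := by
    ext x
    simp only [Set.mem_setOf_eq]
    exact and_congr_right fun _ => ⟨fun hxa => IEqv_trans hz h0 hreg horth hH hxa h,
      fun hxb => IEqv_trans hz h0 hreg horth hH hxb (IEqv_symm h)⟩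
  rw [this]

lemma LsetOf_eq {a b : S} (h : LEqv z a b) : LsetOf z a = LsetOf z b := by
  unfold LsetOf
  have : {x : S | x ≠ z ∧ LEqv z x a} = {x | x ≠ z ∧ LEqv z x b} := by
    ext x
    simp only [Set.mem_setOf_eq]
    exact and_congr_right fun _ => ⟨fun hxa => LEqv_trans hz h0 hreg horth hH hxa h,
      fun hxb => LEqv_trans hz h0 hreg horth hH hxb (LEqv_symm h)⟩
  rw [this]

omit horth hH in
lemma IEqv_refl {a : S} (ha : a ≠ z) : IEqv z a a := by
  obtain ⟨a', ha'⟩ := hreg a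
  have hpa := invs_props hz ha ha'
  exact ⟨a', hpa.2.2, hpa.2.2⟩

omit horth hH in
lemma LEqv_refl {a : S} (ha : a ≠ z) : LEqv z a a := by
  obtain ⟨a', ha'⟩ := hreg a
  have hpa := invs_props hz ha ha'
  exact ⟨a', hpa.2.1, hpa.2.1⟩

lemma rClass_image_cls {a : S} (ha : a ≠ z) :
    rClass '' {y | invs y = invs a} = RsetOf z a := by
  rw [cls_eq hz h0 hreg horth hH ha]
  apply Set.Subset.antisymm
  · rintro P ⟨y, ⟨hy0, hI, _⟩, rfl⟩
    exact ⟨y, ⟨hy0, hI⟩, rfl⟩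
  · rintro P ⟨x, ⟨hx0, hI⟩, rfl⟩
    obtain ⟨c, hc0, hcR, hcL⟩ := meet hz h0 hreg hx0 ha
    refine ⟨c, ⟨hc0, ?_, ?_⟩, rClass_eq_iff.mpr hcR⟩
    · exact (IEqv_congr hz hcR).mpr hI
    · exact (LEqv_congr hz hcL).mpr (LEqv_refl hz h0 hreg ha)

lemma lClass_image_cls {a : S} (ha : a ≠ z) :
    lClass '' {y | invs y = invs a} = LsetOf z a := by
  rw [cls_eq hz h0 hreg horth hH ha]
  apply Set.Subset.antisymm
  · rintro P ⟨y, ⟨hy0, _, hL⟩, rfl⟩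
    exact ⟨y, ⟨hy0, hL⟩, rfl⟩
  · rintro P ⟨x, ⟨hx0, hL⟩, rfl⟩
    obtain ⟨c, hc0, hcR, hcL⟩ := meet hz h0 hreg ha hx0
    refine ⟨c, ⟨hc0, ?_, ?_⟩, lClass_eq_iff.mpr hcL⟩
    · exact (IEqv_congr hz hcR).mpr (IEqv_refl hz h0 hreg ha)
    · exact (LEqv_congr hz hcL).mpr hL

end Main3
lemma ncard_sprod {α β : Type*} [Finite α] [Finite β] (s : Set α) (t : Set β) :
    (s ×ˢ t).ncard = s.ncard * t.ncard := by
  rw [← Nat.card_coe_set_eq, ← Nat.card_coe_set_eq, ← Nat.card_coe_set_eq]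
  rw [Nat.card_congr (Equiv.Set.prod s t), Nat.card_prod]

section Main4

variable [Semigroup S] [Fintype S] {z : S}
variable (hz : ∀ x : S, z * x = z ∧ x * z = z)
  (h0 : ∀ I : Set S, I.Nonempty → (∀ a ∈ I, ∀ s : S, s * a ∈ I ∧ a * s ∈ I) →
    I = {z} ∨ I = Set.univ)
  (hreg : IsRegularSemigroup S)
  (horth : ∀ e f : S, e * e = e → f * f = f → (e * f) * (e * f) = e * f)
  (hH : ∀ a b : S, greenH a b → a = b)

include hz h0 hreg horth hH

lemma cls_ncard {a : S} (ha : a ≠ z) :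
    {y | invs y = invs a}.ncard = (RsetOf z a).ncard * (LsetOf z a).ncard := by
  have hbij : Set.BijOn (fun y => (rClass y, lClass y)) {y | invs y = invs a}
      ((RsetOf z a) ×ˢ (LsetOf z a)) := by
    refine ⟨?_, ?_, ?_⟩
    · intro y hy
      have hy' := hy
      rw [cls_eq hz h0 hreg horth hH ha] at hy'
      obtain ⟨hy0, hI, hL⟩ := hy'
      exact ⟨⟨y, ⟨hy0, hI⟩, rfl⟩, ⟨y, ⟨hy0, hL⟩, rfl⟩⟩
    · intro y _ y' _ hyy'
      have h1 : rClass y = rClass y' := congrArg Prod.fst hyy'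
      have h2 : lClass y = lClass y' := congrArg Prod.snd hyy'
      exact hH y y' ⟨lClass_eq_iff.mp h2, rClass_eq_iff.mp h1⟩
    · rintro ⟨P, Q⟩ ⟨⟨u, ⟨hu0, hIu⟩, rfl⟩, ⟨v, ⟨hv0, hLv⟩, rfl⟩⟩
      obtain ⟨c, hc0, hcR, hcL⟩ := meet hz h0 hreg hu0 hv0
      refine ⟨c, ?_, ?_⟩
      · rw [cls_eq hz h0 hreg horth hH ha]
        refine ⟨hc0, (IEqv_congr hz hcR).mpr hIu, (LEqv_congr hz hcL).mpr hLv⟩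
      · show (rClass c, lClass c) = (rClass u, lClass v)
        rw [rClass_eq_iff.mpr hcR, lClass_eq_iff.mpr hcL]
  calc {y | invs y = invs a}.ncard
      = ((fun y => (rClass y, lClass y)) '' {y | invs y = invs a}).ncard :=
        (Set.ncard_image_of_injOn hbij.injOn).symm
    _ = ((RsetOf z a) ×ˢ (LsetOf z a)).ncard := by rw [hbij.image_eq]
    _ = (RsetOf z a).ncard * (LsetOf z a).ncard := ncard_sprod _ _

omit hz h0 hreg horth hH in
lemma idem_mem_invs_self {e : S} (hee : e * e = e) : e ∈ invs e := by
  constructor <;> rw [hee, hee]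

/-- For a nonzero idempotent, `(rClass '' invs e).ncard = (RsetOf z e).ncard` and
similarly for L. -/
lemma m_eq {e : S} (he : e ≠ z) (hee : e * e = e) :
    (rClass '' invs e).ncard = (RsetOf z e).ncard ∧
    (lClass '' invs e).ncard = (LsetOf z e).ncard := by
  have h1 : invs e = {y | invs y = invs e} :=
    invs_mem_invs hz h0 hreg horth hH he (idem_mem_invs_self hee)
  rw [h1, rClass_image_cls hz h0 hreg horth hH he, lClass_image_cls hz h0 hreg horth hH he]
  exact ⟨rfl, rfl⟩

/-- The two idempotents witnessing the "transposed" blocks of `a` and an inverse `a'`. -/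
lemma corner_idems {a a' : S} (ha : a ≠ z) (ha' : a' ∈ invs a) :
    ∃ e f : S, e ≠ z ∧ e * e = e ∧ f ≠ z ∧ f * f = f ∧
      RsetOf z e = RsetOf z a ∧ LsetOf z e = LsetOf z a' ∧
      RsetOf z f = RsetOf z a' ∧ LsetOf z f = LsetOf z a := by
  have hp := invs_props hz ha ha'
  obtain ⟨e, he0, heR, heL⟩ := meet hz h0 hreg ha hp.1
  obtain ⟨f, hf0, hfR, hfL⟩ := meet hz h0 hreg hp.1 ha
  have hae : a' * e ≠ z := fun hq => hp.2.2 ((greenR_mul_left hz heR a').mp hq)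
  have hea : e * a ≠ z := fun hq => hp.2.2 ((greenL_mul_right hz heL a).mp hq)
  have hee : e * e ≠ z := fun hq =>
    hp.2.2 (((greenL_mul_right hz heL e).trans (greenR_mul_left hz heR a')).mp hq)
  have haf : a * f ≠ z := fun hq => hp.2.1 ((greenR_mul_left hz hfR a).mp hq)
  have hfa : f * a' ≠ z := fun hq => hp.2.1 ((greenL_mul_right hz hfL a').mp hq)
  have hff : f * f ≠ z := fun hq =>
    hp.2.1 (((greenL_mul_right hz hfL f).trans (greenR_mul_left hz hfR a)).mp hq)
  refine ⟨e, f, he0, idem_of_sq hz h0 hH hee, hf0, idem_of_sq hz h0 hH hff, ?_, ?_, ?_, ?_⟩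
  · exact RsetOf_eq hz h0 hreg horth hH ⟨a', hae, hp.2.2⟩
  · exact LsetOf_eq hz h0 hreg horth hH ⟨a, hea, hp.2.2⟩
  · exact RsetOf_eq hz h0 hreg horth hH ⟨a, haf, hp.2.1⟩
  · exact LsetOf_eq hz h0 hreg horth hH ⟨a', hfa, hp.2.1⟩

end Main4
/-- Abstract matching construction: if the "inverse sets" of a finite type behave like
unions of equivalence classes paired off by an involution, with matching cardinalities,
then a permutation matching exists. -/
lemma abstract_matching {α : Type*} [Fintype α] (V : α → Set α)
    (hsym : ∀ a b : α, a ∈ V b ↔ b ∈ V a)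
    (hne : ∀ a, (V a).Nonempty)
    (hclass : ∀ a, ∀ x ∈ V a, V x = {y | V y = V a})
    (hcard : ∀ a, (V a).ncard = {y | V y = V a}.ncard) :
    ∃ g : α → α, Function.Bijective g ∧ ∀ a, g a ∈ V a := by
  classical
  set Φ : Set α → Set α := fun p => {y | V y = p} with hΦ
  have hmemiff : ∀ a x : α, x ∈ V a ↔ V x = Φ (V a) := by
    intro a x
    constructor
    · intro hx
      exact hclass a x hx
    · intro h
      have ha : a ∈ Φ (V a) := rfl
      rw [← h] at ha
      exact (hsym a x).mp ha
  have hcards : ∀ p : Set α, Nat.card {x // V x = p} = Nat.card {x // V x = Φ p} := by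
    intro p
    by_cases hp : ∃ a, V a = p
    · obtain ⟨a, rfl⟩ := hp
      have e1 : {x | V x = V a} = Φ (V a) := rfl
      have e2 : {x | V x = Φ (V a)} = V a := by
        ext x
        exact (hmemiff a x).symm
      calc Nat.card {x // V x = V a} = ({x | V x = V a} : Set α).ncard :=
            Nat.card_coe_set_eq _
        _ = (V a).ncard := (hcard a).symm
        _ = Nat.card (V a) := (Nat.card_coe_set_eq _).symm
        _ = Nat.card {x // V x = Φ (V a)} :=
            Nat.card_congr (Equiv.subtypeEquivRight fun x => hmemiff a x)
    · have h1 : IsEmpty {x // V x = p} := ⟨fun x => hp ⟨x.1, x.2⟩⟩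
      have h2 : IsEmpty {x // V x = Φ p} := by
        constructor
        rintro ⟨x, hx⟩
        obtain ⟨u, hu⟩ := hne x
        rw [hx] at hu
        exact hp ⟨u, hu⟩
      rw [@Nat.card_of_isEmpty _ h1, @Nat.card_of_isEmpty _ h2]
  have hEx : ∀ p : Set α, Nonempty ({x // V x = p} ≃ {x // V x = Φ p}) := by
    intro p
    haveI := Fintype.ofFinite {x // V x = p}
    haveI := Fintype.ofFinite {x // V x = Φ p}
    refine ⟨Fintype.equivOfCardEq ?_⟩
    rw [← Nat.card_eq_fintype_card, ← Nat.card_eq_fintype_card]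
    exact hcards p
  let E : ∀ p : Set α, {x // V x = p} ≃ {x // V x = Φ p} := fun p => (hEx p).some
  let g : α → α := fun a => (E (V a) ⟨a, rfl⟩).val
  have hgmem : ∀ a, V (g a) = Φ (V a) := fun a => (E (V a) ⟨a, rfl⟩).property
  have hgV : ∀ a, g a ∈ V a := fun a => (hmemiff a (g a)).mpr (hgmem a)
  have hcongr : ∀ (p q : Set α) (h : p = q) (x : α) (hx : V x = p),
      (E p ⟨x, hx⟩).val = (E q ⟨x, hx.trans h⟩).val := by
    rintro p q rfl x hx
    rfl
  have hginj : Function.Injective g := by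
    intro a b hab
    have h1 : Φ (V a) = Φ (V b) := by
      rw [← hgmem a, ← hgmem b, hab]
    have h2 : V a = V b := by
      have haa : a ∈ Φ (V a) := rfl
      rw [h1] at haa
      exact haa
    have h3 : (E (V a) ⟨a, rfl⟩).val =
        (E (V a) ⟨b, (rfl : V b = V b).trans h2.symm⟩).val := by
      calc (E (V a) ⟨a, rfl⟩).val = g a := rfl
        _ = g b := hab
        _ = (E (V b) ⟨b, rfl⟩).val := rfl
        _ = (E (V a) ⟨b, (rfl : V b = V b).trans h2.symm⟩).val :=
            hcongr (V b) (V a) h2.symm b rfl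
    have h4 : (⟨a, rfl⟩ : {x // V x = V a}) = ⟨b, (rfl : V b = V b).trans h2.symm⟩ :=
      (E (V a)).injective (Subtype.ext h3)
    exact congrArg Subtype.val h4
  exact ⟨g, Finite.injective_iff_bijective.mp hginj, hgV⟩
/-- Theorem 3.6. A finite orthodox 0-rectangular band has a
permutation matching iff its maximal rectangular subbands `V(e)` (`e` a nonzero
idempotent) are pairwise similar, i.e. `m_e * n_f = m_f * n_e`, where `m_e` is the
number of R-classes and `n_e` the number of L-classes of `V(e)`. -/
theorem stmt_19 (S : Type*) [Semigroup S] [Fintype S]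
    (z : S) (hz : ∀ x : S, z * x = z ∧ x * z = z)
    (hreg : IsRegularSemigroup S)
    (horth : ∀ e f : S, e * e = e → f * f = f → (e * f) * (e * f) = e * f)
    (h0simple : (∃ a b : S, a * b ≠ z) ∧
      ∀ I : Set S, I.Nonempty → (∀ a ∈ I, ∀ s : S, s * a ∈ I ∧ a * s ∈ I) →
        I = {z} ∨ I = Set.univ)
    (hH : ∀ a b : S, greenH a b → a = b) :
    (∃ g : S → S, IsPermMatching g) ↔
      ∀ e f : S, e ≠ z → e * e = e → f ≠ z → f * f = f →
        (rClass '' invs e).ncard * (lClass '' invs f).ncard =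
          (rClass '' invs f).ncard * (lClass '' invs e).ncard := by
  obtain ⟨-, h0⟩ := h0simple
  constructor
  · -- matching implies similarity
    rintro ⟨g, hgbij, hgmem⟩
    have hle : ∀ a : S, {y | invs y = invs a}.ncard ≤ (invs a).ncard := by
      intro a
      have hsub : g '' {y | invs y = invs a} ⊆ invs a := by
        rintro w ⟨y, hy, rfl⟩
        have := hgmem y
        rwa [hy] at this
      calc {y | invs y = invs a}.ncard
          = (g '' {y | invs y = invs a}).ncard :=
            (Set.ncard_image_of_injective _ hgbij.injective).symm
        _ ≤ (invs a).ncard := Set.ncard_le_ncard hsub (Set.toFinite _)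
    have heqcard : ∀ a a' : S, a ≠ z → a' ∈ invs a →
        (invs a).ncard = {y | invs y = invs a}.ncard := by
      intro a a' ha ha'
      have hp := invs_props hz ha ha'
      have hCa' : invs a = {y | invs y = invs a'} :=
        invs_mem_invs hz h0 hreg horth hH hp.1 ⟨ha'.2, ha'.1⟩
      have hCa : invs a' = {y | invs y = invs a} :=
        invs_mem_invs hz h0 hreg horth hH ha ha'
      have q1 := hle a
      have q2 := hle a'
      rw [← hCa'] at q2
      rw [hCa] at q2
      exact le_antisymm q2 q1
    intro e f he0 hee hf0 hff
    obtain ⟨a, ha0, haR, haL⟩ := meet hz h0 hreg he0 hf0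
    obtain ⟨a', ha'⟩ := hreg a
    have hp := invs_props hz ha0 ha'
    have heez : e * e ≠ z := by rw [hee]; exact he0
    have hffz : f * f ≠ z := by rw [hff]; exact hf0
    have hea : e * a ≠ z := fun hq => heez ((greenR_mul_left hz haR e).mp hq)
    have haf : a * f ≠ z := fun hq => hffz ((greenL_mul_right hz haL f).mp hq)
    have hRae : RsetOf z a = RsetOf z e :=
      RsetOf_eq hz h0 hreg horth hH ⟨e, hea, heez⟩
    have hLaf : LsetOf z a = LsetOf z f :=
      LsetOf_eq hz h0 hreg horth hH ⟨f, haf, hffz⟩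
    have hRa'f : RsetOf z a' = RsetOf z f :=
      RsetOf_eq hz h0 hreg horth hH ⟨a, hp.2.1, haf⟩
    have hLa'e : LsetOf z a' = LsetOf z e :=
      LsetOf_eq hz h0 hreg horth hH ⟨a, hp.2.2, hea⟩
    obtain ⟨hme, hne'⟩ := m_eq hz h0 hreg horth hH he0 hee
    obtain ⟨hmf, hnf⟩ := m_eq hz h0 hreg horth hH hf0 hff
    rw [hme, hnf, hmf, hne']
    have hCa' : invs a = {y | invs y = invs a'} :=
      invs_mem_invs hz h0 hreg horth hH hp.1 ⟨ha'.2, ha'.1⟩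
    calc (RsetOf z e).ncard * (LsetOf z f).ncard
        = (RsetOf z a).ncard * (LsetOf z a).ncard := by rw [hRae, hLaf]
      _ = {y | invs y = invs a}.ncard := (cls_ncard hz h0 hreg horth hH ha0).symm
      _ = (invs a).ncard := (heqcard a a' ha0 ha').symm
      _ = {y | invs y = invs a'}.ncard := by rw [hCa']
      _ = (RsetOf z a').ncard * (LsetOf z a').ncard := cls_ncard hz h0 hreg horth hH hp.1
      _ = (RsetOf z f).ncard * (LsetOf z e).ncard := by rw [hRa'f, hLa'e]
  · -- similarity implies matching
    intro hsim
    have hmatch := abstract_matching (α := S) invs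
      (fun a b => ⟨fun h => ⟨h.2, h.1⟩, fun h => ⟨h.2, h.1⟩⟩)
      (fun a => (hreg a).imp fun b hb => hb)
      (by
        intro a x hx
        by_cases ha : a = z
        · have hx0 : x = z := by
            have hx' := hx
            rw [ha, invs_z hz] at hx'
            exact hx'
          rw [hx0, ha, cls_z_eq hz hreg, invs_z hz]
        · exact invs_mem_invs hz h0 hreg horth hH ha hx)
      (by
        intro a
        by_cases ha : a = z
        · rw [ha, cls_z_eq hz hreg, invs_z hz]
        · obtain ⟨a', ha'⟩ := hreg a
          have hp := invs_props hz ha ha'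
          obtain ⟨e, f, he0, hee, hf0, hff, hRe, hLe, hRf, hLf⟩ :=
            corner_idems hz h0 hreg horth hH ha ha'
          have hsim' := hsim e f he0 hee hf0 hff
          obtain ⟨hme, hne'⟩ := m_eq hz h0 hreg horth hH he0 hee
          obtain ⟨hmf, hnf⟩ := m_eq hz h0 hreg horth hH hf0 hff
          rw [hme, hnf, hmf, hne'] at hsim'
          have hCa' : invs a = {y | invs y = invs a'} :=
            invs_mem_invs hz h0 hreg horth hH hp.1 ⟨ha'.2, ha'.1⟩
          calc (invs a).ncard = {y | invs y = invs a'}.ncard := by rw [hCa']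
            _ = (RsetOf z a').ncard * (LsetOf z a').ncard :=
                cls_ncard hz h0 hreg horth hH hp.1
            _ = (RsetOf z f).ncard * (LsetOf z e).ncard := by rw [← hRf, ← hLe]
            _ = (RsetOf z e).ncard * (LsetOf z f).ncard := hsim'.symm
            _ = (RsetOf z a).ncard * (LsetOf z a).ncard := by rw [← hRe, ← hLf]
            _ = {y | invs y = invs a}.ncard := (cls_ncard hz h0 hreg horth hH ha).symm)
    obtain ⟨g, hgbij, hgmem⟩ := hmatch
    exact ⟨g, hgbij, hgmem⟩
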